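/- arXiv:1204.2857 — 3 statements merged into one kernel-verified Lean document; each statement's English description precedes it below -/
import Mathlib

section
/- Let A_τ ∈ ℝ^{n×n}, B_τ ∈ ℝ^{n×m}, K ∈ ℝ^{m×n}, and Q ∈ ℝ^{n×n}, R ∈ ℝ^{m×m}. Assume F := A_τ − B_τK is Schur stable and that S ∈ ℝ^{n×n} satisfies the Lyapunov equation FᵀSF − S + Q + KᵀRK = 0. Let x : ℕ → ℝ^n satisfy x[r+1] = F x[r] and set u[r] := −K x[r]. Then the series J_LQR := Σ_{r=0}^{∞} ( x[r]ᵀ Q x[r] + u[r]ᵀ R u[r] ) converges and equals x[0]ᵀ S x[0]. -/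
open Matrix

/-- A real square matrix is Schur stable if every eigenvalue of it, regarded as a complex
matrix, has modulus strictly less than `1`. -/
def SchurStable {ι : Type*} [Fintype ι] [DecidableEq ι] (A : Matrix ι ι ℝ) : Prop :=
  ∀ μ : ℂ, ((A.map Complex.ofReal).charpoly).IsRoot μ → ‖μ‖ < 1

/-!
With `P := Q + KᵀRK`, the `r`-th cost is `x₀ᵀ (Fᵀ)ʳ P Fʳ x₀`, and the Lyapunov equation
turns `(Fᵀ)ʳ P Fʳ` into the telescoping difference `(Fᵀ)ʳ S Fʳ - (Fᵀ)ʳ⁺¹ S Fʳ⁺¹`.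
Schur stability means that the spectral radius of `F` (as a complex matrix) is below `1`,
so by Gelfand's formula `‖Fʳ‖` decays geometrically; this gives absolute convergence
and `(Fᵀ)ʳ S Fʳ → 0`.
-/

open Filter

theorem spectrum.exists_norm_pow_le_of_spectralRadius_lt_one {A : Type*} [NormedRing A]
    [NormedAlgebra ℂ A] [CompleteSpace A] {a : A} (ha : spectralRadius ℂ a < 1) :
    ∃ ρ : ℝ, 0 ≤ ρ ∧ ρ < 1 ∧ ∀ᶠ n : ℕ in atTop, ‖a ^ n‖ ≤ ρ ^ n := by
  obtain ⟨ρ, hρa, hρ1⟩ := ENNReal.lt_iff_exists_nnreal_btwn.mp ha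
  refine ⟨ρ, ρ.coe_nonneg, mod_cast hρ1, ?_⟩
  filter_upwards [(spectrum.pow_norm_pow_one_div_tendsto_nhds_spectralRadius a).eventually_lt_const
    hρa, eventually_gt_atTop 0] with n hn hn0
  rw [ENNReal.ofReal_lt_iff_lt_toReal (by positivity) ENNReal.coe_ne_top, one_div] at hn
  simpa using (Real.rpow_inv_le_iff_of_pos (norm_nonneg _) ρ.coe_nonneg (by positivity)).mp hn.le

theorem Matrix.dotProduct_transpose_mul_mul_mulVec {l m n R : Type*} [Fintype l] [Fintype m]
    [Fintype n] [CommSemiring R] (B : Matrix l m R) (S : Matrix l n R) (C : Matrix n m R)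
    (v w : m → R) :
    v ⬝ᵥ (Bᵀ * S * C) *ᵥ w = (B *ᵥ v) ⬝ᵥ S *ᵥ (C *ᵥ w) := by
  rw [← mulVec_mulVec, ← mulVec_mulVec, dotProduct_mulVec, vecMul_transpose]

theorem HasSum.dotProduct_mulVec {β m n R : Type*} [Fintype m] [Fintype n] [CommSemiring R]
    [TopologicalSpace R] [IsTopologicalSemiring R] {f : β → Matrix m n R} {A : Matrix m n R}
    (h : HasSum f A) (v : m → R) (w : n → R) :
    HasSum (fun b => v ⬝ᵥ f b *ᵥ w) (v ⬝ᵥ A *ᵥ w) :=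
  h.map (G := Matrix m n R →+ R)
    { toFun X := v ⬝ᵥ X *ᵥ w
      map_zero' := by simp only [zero_mulVec, dotProduct_zero]
      map_add' X Y := by simp only [add_mulVec, dotProduct_add] }
    (continuous_const.dotProduct (continuous_id.matrix_mulVec continuous_const))

namespace SchurStable

variable {ι : Type*} [Fintype ι] [DecidableEq ι] {F : Matrix ι ι ℝ}

-- The Frobenius norm is invariant under transposition, so `‖(Fᵀ)ʳ‖ = ‖Fʳ‖`.
attribute [local instance] Matrix.frobeniusNormedRing Matrix.frobeniusNormedAlgebra

theorem spectralRadius_map_ofReal_lt_one (hF : SchurStable F) :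
    spectralRadius ℂ (F.map Complex.ofReal) < 1 := by
  rcases (spectrum ℂ (F.map Complex.ofReal)).eq_empty_or_nonempty with h | h
  · simp [spectralRadius, h]
  · exact_mod_cast spectrum.spectralRadius_lt_of_forall_lt_of_nonempty h fun μ hμ =>
      (hF μ (Matrix.mem_spectrum_iff_isRoot_charpoly.mp hμ) : _)

theorem exists_norm_pow_le (hF : SchurStable F) :
    ∃ ρ : ℝ, 0 ≤ ρ ∧ ρ < 1 ∧ ∀ᶠ n : ℕ in atTop, ‖F ^ n‖ ≤ ρ ^ n := by
  obtain ⟨ρ, hρ0, hρ1, hρ⟩ :=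
    spectrum.exists_norm_pow_le_of_spectralRadius_lt_one hF.spectralRadius_map_ofReal_lt_one
  refine ⟨ρ, hρ0, hρ1, hρ.mono fun n hn => ?_⟩
  have hpow : F.map Complex.ofReal ^ n = (F ^ n).map Complex.ofReal :=
    (map_pow Complex.ofRealHom.mapMatrix F n).symm
  rwa [hpow, frobenius_norm_map_eq _ _ Complex.norm_real] at hn

theorem summable_transpose_pow_mul_mul_pow (hF : SchurStable F) (X : Matrix ι ι ℝ) :
    Summable fun r : ℕ => (Fᵀ) ^ r * X * F ^ r := by
  obtain ⟨ρ, hρ0, hρ1, hρ⟩ := hF.exists_norm_pow_le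
  have hρ2 : ρ ^ 2 < 1 := pow_lt_one₀ hρ0 hρ1 two_ne_zero
  refine Summable.of_norm_bounded_eventually_nat
    ((summable_geometric_of_lt_one (by positivity) hρ2).mul_left ‖X‖) ?_
  filter_upwards [hρ] with r hr
  calc ‖(Fᵀ) ^ r * X * F ^ r‖ ≤ ‖F ^ r‖ * ‖X‖ * ‖F ^ r‖ := by
        grw [norm_mul_le, norm_mul_le, ← transpose_pow, frobenius_norm_transpose]
    _ = ‖X‖ * ‖F ^ r‖ ^ 2 := by ring
    _ ≤ ‖X‖ * (ρ ^ r) ^ 2 := by gcongr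
    _ = ‖X‖ * (ρ ^ 2) ^ r := by ring

theorem hasSum_transpose_pow_mul_mul_pow (hF : SchurStable F) {S P : Matrix ι ι ℝ}
    (hS : Fᵀ * S * F - S + P = 0) :
    HasSum (fun r : ℕ => (Fᵀ) ^ r * P * F ^ r) S := by
  have hP : P = S - Fᵀ * S * F := by rw [← sub_eq_zero, ← hS]; abel
  have htelescope : ∀ r : ℕ, (Fᵀ) ^ r * P * F ^ r =
      (Fᵀ) ^ r * S * F ^ r - (Fᵀ) ^ (r + 1) * S * F ^ (r + 1) := by
    intro r
    rw [hP, pow_succ, pow_succ']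
    noncomm_ring
  rw [(hF.summable_transpose_pow_mul_mul_pow P).hasSum_iff_tendsto_nat]
  simp_rw [htelescope, Finset.sum_range_sub']
  simpa using
    tendsto_const_nhds.sub (hF.summable_transpose_pow_mul_mul_pow S).tendsto_atTop_zero

end SchurStable

theorem stmt9_general {n m : ℕ}
    (K : Matrix (Fin m) (Fin n) ℝ) (Q : Matrix (Fin n) (Fin n) ℝ) (R : Matrix (Fin m) (Fin m) ℝ)
    (F : Matrix (Fin n) (Fin n) ℝ) (hFs : SchurStable F)
    (S : Matrix (Fin n) (Fin n) ℝ) (hS : Fᵀ * S * F - S + Q + Kᵀ * R * K = 0)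
    (x : ℕ → Fin n → ℝ) (hx : ∀ r : ℕ, x (r + 1) = F.mulVec (x r))
    (u : ℕ → Fin m → ℝ) (hu : ∀ r : ℕ, u r = -(K.mulVec (x r))) :
    HasSum (fun r : ℕ => (x r) ⬝ᵥ (Q.mulVec (x r)) + (u r) ⬝ᵥ (R.mulVec (u r)))
      ((x 0) ⬝ᵥ (S.mulVec (x 0))) := by
  have hxF : ∀ r, x r = (F ^ r) *ᵥ x 0 := by
    intro r
    induction r with
    | zero => simp
    | succ r ih => rw [hx, ih, mulVec_mulVec, pow_succ']
  have hcost : ∀ r, (x r) ⬝ᵥ (Q.mulVec (x r)) + (u r) ⬝ᵥ (R.mulVec (u r)) =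
      x 0 ⬝ᵥ ((Fᵀ) ^ r * (Q + Kᵀ * R * K) * F ^ r) *ᵥ x 0 := by
    intro r
    rw [hu, mulVec_neg, neg_dotProduct, dotProduct_neg, neg_neg, ← transpose_pow,
      dotProduct_transpose_mul_mul_mulVec, ← hxF, ← dotProduct_transpose_mul_mul_mulVec,
      add_mulVec, dotProduct_add]
  have hLyap : Fᵀ * S * F - S + (Q + Kᵀ * R * K) = 0 := by rw [← hS]; abel
  simpa only [hcost] using
    (hFs.hasSum_transpose_pow_mul_mul_pow hLyap).dotProduct_mulVec (x 0) (x 0)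

theorem stmt9 {n m : ℕ} (Aτ : Matrix (Fin n) (Fin n) ℝ) (Bτ : Matrix (Fin n) (Fin m) ℝ)
    (K : Matrix (Fin m) (Fin n) ℝ) (Q : Matrix (Fin n) (Fin n) ℝ) (R : Matrix (Fin m) (Fin m) ℝ)
    (F : Matrix (Fin n) (Fin n) ℝ) (hF : F = Aτ - Bτ * K) (hFs : SchurStable F)
    (S : Matrix (Fin n) (Fin n) ℝ) (hS : Fᵀ * S * F - S + Q + Kᵀ * R * K = 0)
    (x : ℕ → Fin n → ℝ) (hx : ∀ r : ℕ, x (r + 1) = F.mulVec (x r))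
    (u : ℕ → Fin m → ℝ) (hu : ∀ r : ℕ, u r = -(K.mulVec (x r))) :
    HasSum (fun r : ℕ => (x r) ⬝ᵥ (Q.mulVec (x r)) + (u r) ⬝ᵥ (R.mulVec (u r)))
      ((x 0) ⬝ᵥ (S.mulVec (x 0))) :=
  stmt9_general K Q R F hFs S hS x hx u hu
end

section
/- Let A ∈ ℝ^{n×n} be Schur stable and W ∈ ℝ^{n×n}. Define the covariance iteration P[r+1] := A P[r] Aᵀ + W from an arbitrary initial matrix P[0] ∈ ℝ^{n×n}. Then P[r] converges as r → ∞ to Σ := Σ_{k=0}^{∞} A^k W (Aᵀ)^k, and Σ is the unique solution P of the equation A P Aᵀ − P + W = 0. -/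
open Matrix Filter

/-!
Schur stability says that the complex matrix `A` has spectral radius `< 1`, so by Gelfand's
formula `‖A ^ k‖ ≤ r ^ k` eventually, for some `r < 1`. In the Frobenius norm the same bound holds
for `Aᵀ ^ k`, hence `∑ A ^ k X Aᵀ ^ k` converges for every `X`.

The iteration is the affine recurrence `P (r + 1) = L (P r) + W` for the additive map
`L X = A X Aᵀ`, with `L^[k] X = A ^ k X Aᵀ ^ k`. Unrolled, `P r = L^[r] (P 0) + ∑_{k<r} L^[k] W`,
which tends to `Σ = ∑ L^[k] W`. Applying the continuous map `L` to this series shifts it, so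
`L Σ + W = Σ`; and the difference of two solutions is fixed by `L`, yet `L^[k]` of it tends to `0`.
-/

open Topology
open scoped NNReal ENNReal

theorem spectrum.eventually_norm_pow_le_of_spectralRadius_lt {A : Type*} [NormedRing A]
    [NormedAlgebra ℂ A] [CompleteSpace A] {a : A} {r : ℝ≥0} (h : spectralRadius ℂ a < r) :
    ∀ᶠ k : ℕ in atTop, ‖a ^ k‖ ≤ (r : ℝ) ^ k := by
  filter_upwards [(pow_norm_pow_one_div_tendsto_nhds_spectralRadius a).eventually_lt_const h,
    eventually_ne_atTop 0] with k hk hk0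
  have hroot : ‖a ^ k‖ ^ (1 / k : ℝ) ≤ r :=
    (ENNReal.ofReal_lt_coe_iff (by positivity)).mp hk |>.le
  calc ‖a ^ k‖ = (‖a ^ k‖ ^ (1 / k : ℝ)) ^ k := by
        rw [← Real.rpow_natCast, ← Real.rpow_mul (norm_nonneg _), one_div_mul_cancel (by simpa),
          Real.rpow_one]
    _ ≤ (r : ℝ) ^ k := by gcongr

section AffineRecurrence

variable {E : Type*} [AddCommGroup E] (L : E →+ E) {w : E}

theorem AddMonoidHom.eq_iterate_add_sum_of_recurrence {x : ℕ → E}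
    (hx : ∀ r, x (r + 1) = L (x r) + w) (r : ℕ) :
    x r = L^[r] (x 0) + ∑ k ∈ Finset.range r, L^[k] w := by
  induction r with
  | zero => simp
  | succ r ih =>
    rw [hx, ih, map_add, map_sum, Finset.sum_range_succ', Function.iterate_succ_apply',
      Function.iterate_zero_apply]
    simp only [← Function.iterate_succ_apply' L]
    abel

variable [TopologicalSpace E]

theorem AddMonoidHom.eq_of_map_add_eq [T2Space E]
    (hL : ∀ v, Tendsto (fun k => L^[k] v) atTop (𝓝 0)) {y z : E}
    (hy : L y + w = y) (hz : L z + w = z) : y = z := by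
  have hfix : ∀ k, L^[k] (y - z) = y - z := fun k =>
    Function.iterate_fixed (by rw [map_sub]; nth_rw 2 [← hy, ← hz]; abel) k
  exact sub_eq_zero.mp <| tendsto_nhds_unique (by simp only [hfix]; exact tendsto_const_nhds)
    (hL (y - z))

variable [IsTopologicalAddGroup E] {s : E}

theorem AddMonoidHom.tendsto_of_recurrence {x : ℕ → E}
    (hx : ∀ r, x (r + 1) = L (x r) + w) (hx₀ : Tendsto (fun k => L^[k] (x 0)) atTop (𝓝 0))
    (hs : HasSum (fun k => L^[k] w) s) : Tendsto x atTop (𝓝 s) := by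
  simpa [← L.eq_iterate_add_sum_of_recurrence hx] using hx₀.add hs.tendsto_sum_nat

theorem AddMonoidHom.map_add_eq_of_hasSum_iterate [T2Space E] (hL : Continuous L)
    (hs : HasSum (fun k => L^[k] w) s) : L s + w = s := by
  have hshift : HasSum (fun k => L^[k + 1] w) (L s) := by
    simpa only [Function.comp_def, ← Function.iterate_succ_apply' L] using hs.map L hL
  simpa using ((hasSum_nat_add_iff (f := fun k => L^[k] w) 1).mp hshift).unique hs

end AffineRecurrence

theorem AddMonoidHom.iterate_mulRight_comp_mulLeft {R : Type*} [Semiring R] (a b x : R) (k : ℕ) :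
    ((mulRight b).comp (mulLeft a))^[k] x = a ^ k * x * b ^ k := by
  induction k with
  | zero => simp
  | succ k ih =>
    rw [Function.iterate_succ_apply', ih]
    show a * (a ^ k * x * b ^ k) * b = _
    simp only [pow_succ' a, pow_succ b, mul_assoc]

namespace SchurStable

variable {ι : Type*} [Fintype ι] [DecidableEq ι] {A : Matrix ι ι ℝ}

open scoped Matrix.Norms.Frobenius

theorem spectralRadius_lt_one (hA : SchurStable A) :
    spectralRadius ℂ (A.map Complex.ofReal) < 1 := by
  rcases subsingleton_or_nontrivial (Matrix ι ι ℂ) with _ | _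
  · simp [spectralRadius, spectrum.of_subsingleton]
  · exact_mod_cast spectrum.spectralRadius_lt_of_forall_lt (r := 1) _ fun z hz =>
      mod_cast hA z (mem_spectrum_iff_isRoot_charpoly.mp hz)

theorem exists_lt_one_eventually_norm_pow_le (hA : SchurStable A) :
    ∃ r : ℝ≥0, r < 1 ∧ ∀ᶠ k : ℕ in atTop, ‖A ^ k‖ ≤ (r : ℝ) ^ k := by
  obtain ⟨r, hρr, hr1⟩ := ENNReal.lt_iff_exists_nnreal_btwn.mp hA.spectralRadius_lt_one
  refine ⟨r, mod_cast hr1, ?_⟩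
  filter_upwards [spectrum.eventually_norm_pow_le_of_spectralRadius_lt hρr] with k hk
  have hmap : A.map Complex.ofReal ^ k = (A ^ k).map Complex.ofReal :=
    (map_pow Complex.ofRealHom.mapMatrix A k).symm
  rwa [hmap, frobenius_norm_map_eq _ _ Complex.norm_real] at hk

theorem summable_pow_mul_mul_transpose_pow (hA : SchurStable A) (X : Matrix ι ι ℝ) :
    Summable fun k : ℕ => A ^ k * X * Aᵀ ^ k := by
  obtain ⟨r, hr1, hr⟩ := hA.exists_lt_one_eventually_norm_pow_le
  refine .of_norm_bounded_eventually_nat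
    ((summable_geometric_of_lt_one (r := (r : ℝ) ^ 2) (by positivity)
      (pow_lt_one₀ r.coe_nonneg (mod_cast hr1) two_ne_zero)).mul_left ‖X‖) ?_
  filter_upwards [hr] with k hk
  calc ‖A ^ k * X * Aᵀ ^ k‖ ≤ ‖A ^ k‖ * ‖X‖ * ‖A ^ k‖ := by
        grw [norm_mul_le, norm_mul_le, ← transpose_pow, frobenius_norm_transpose]
    _ ≤ (r : ℝ) ^ k * ‖X‖ * (r : ℝ) ^ k := by gcongr
    _ = ‖X‖ * ((r : ℝ) ^ 2) ^ k := by ring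

end SchurStable

theorem stmt12 {n : ℕ} (A W : Matrix (Fin n) (Fin n) ℝ) (hA : SchurStable A)
    (P : ℕ → Matrix (Fin n) (Fin n) ℝ)
    (hP : ∀ r : ℕ, P (r + 1) = A * P r * Aᵀ + W) :
    ∃ Sigma : Matrix (Fin n) (Fin n) ℝ,
      HasSum (fun k : ℕ => A ^ k * W * (Aᵀ) ^ k) Sigma ∧
      Tendsto P atTop (nhds Sigma) ∧
      (A * Sigma * Aᵀ - Sigma + W = 0) ∧
      (∀ P' : Matrix (Fin n) (Fin n) ℝ, A * P' * Aᵀ - P' + W = 0 → P' = Sigma) := by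
  set L := (AddMonoidHom.mulRight Aᵀ).comp (AddMonoidHom.mulLeft A)
  have hLk (X : Matrix (Fin n) (Fin n) ℝ) (k : ℕ) : L^[k] X = A ^ k * X * Aᵀ ^ k :=
    AddMonoidHom.iterate_mulRight_comp_mulLeft A Aᵀ X k
  have hL : Continuous L := (continuous_const_mul A).mul continuous_const
  have hsum (X : Matrix (Fin n) (Fin n) ℝ) : Summable fun k => L^[k] X := by
    simpa only [hLk] using hA.summable_pow_mul_mul_transpose_pow X
  have hfix (X : Matrix (Fin n) (Fin n) ℝ) : A * X * Aᵀ - X + W = 0 ↔ L X + W = X := by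
    rw [sub_add_eq_add_sub, sub_eq_zero]
    rfl
  obtain ⟨Sigma, hSigma⟩ := hsum W
  have hSigma_fix : L Sigma + W = Sigma := L.map_add_eq_of_hasSum_iterate hL hSigma
  refine ⟨Sigma, by simpa only [hLk] using hSigma,
    L.tendsto_of_recurrence hP (hsum _).tendsto_atTop_zero hSigma, (hfix Sigma).mpr hSigma_fix,
    fun P' hP' => L.eq_of_map_add_eq (fun X => (hsum X).tendsto_atTop_zero) ((hfix P').mp hP')
      hSigma_fix⟩
end

section
/- Let K_P, K_I, K_D ∈ ℝ, τ > 0, and define Â = [[0,1],[0,1]] ∈ ℝ^{2×2}, B̂ = (0,1)ᵀ, Ĉ = (K_D/τ, K_Iτ − K_D/τ), D̂ = K_P + K_Iτ/2 + K_D/τ. Let u : ℕ → ℝ be an input and let x̂ : ℕ → ℝ² satisfy x̂[0] = 0 and x̂[r+1] = Â x̂[r] + B̂ u[r], with output ŷ[r] := Ĉ x̂[r] + D̂ u[r]. Then for every r ≥ 1, ŷ[r] = K_P u[r] + K_I τ ( Σ_{k=0}^{r-1} u[k] + u[r]/2 ) + (K_D/τ)( u[r] − u[r−1] ); that is, the state-space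 system realizes the discretized PID controller with trapezoidal integrator and backward-Euler differentiator. -/
open Matrix

theorem state_succ_eq_partialSums {R : Type*} [CommSemiring R] {u : ℕ → R}
    {x : ℕ → Fin 2 → R} (hx0 : x 0 = 0)
    (hx : ∀ r : ℕ, x (r + 1) = (!![0, 1; 0, 1] : Matrix (Fin 2) (Fin 2) R) *ᵥ x r + u r • ![0, 1])
    (n : ℕ) :
    x (n + 1) = ![∑ k ∈ Finset.range n, u k, ∑ k ∈ Finset.range (n + 1), u k] := by
  induction n with
  | zero =>
    rw [hx, hx0]
    ext i
    fin_cases i <;> simp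
  | succ n ih =>
    rw [hx, ih, Finset.sum_range_succ _ (n + 1)]
    ext i
    fin_cases i <;> simp

theorem stmt15_general (KP KI KD τ : ℝ)
    (u : ℕ → ℝ) (xhat : ℕ → Fin 2 → ℝ) (hx0 : xhat 0 = 0)
    (hx : ∀ r : ℕ, xhat (r + 1) =
      (!![0, 1; 0, 1] : Matrix (Fin 2) (Fin 2) ℝ).mulVec (xhat r) + u r • ![(0 : ℝ), 1])
    (yhat : ℕ → ℝ)
    (hy : ∀ r : ℕ, yhat r =
      ![KD / τ, KI * τ - KD / τ] ⬝ᵥ xhat r + (KP + KI * τ / 2 + KD / τ) * u r) :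
    ∀ r : ℕ, 1 ≤ r →
      yhat r = KP * u r + KI * τ * ((∑ k ∈ Finset.range r, u k) + u r / 2)
        + (KD / τ) * (u r - u (r - 1)) := by
  intro r hr
  obtain ⟨n, rfl⟩ := Nat.exists_eq_add_of_le' hr
  rw [hy, state_succ_eq_partialSums hx0 hx, Finset.sum_range_succ, Nat.add_sub_cancel]
  simp only [cons_dotProduct_cons, dotProduct_of_isEmpty]
  ring

theorem stmt15 (KP KI KD τ : ℝ) (hτ : 0 < τ)
    (u : ℕ → ℝ) (xhat : ℕ → Fin 2 → ℝ) (hx0 : xhat 0 = 0)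
    (hx : ∀ r : ℕ, xhat (r + 1) =
      (!![0, 1; 0, 1] : Matrix (Fin 2) (Fin 2) ℝ).mulVec (xhat r) + u r • ![(0 : ℝ), 1])
    (yhat : ℕ → ℝ)
    (hy : ∀ r : ℕ, yhat r =
      ![KD / τ, KI * τ - KD / τ] ⬝ᵥ xhat r + (KP + KI * τ / 2 + KD / τ) * u r) :
    ∀ r : ℕ, 1 ≤ r →
      yhat r = KP * u r + KI * τ * ((∑ k ∈ Finset.range r, u k) + u r / 2)
        + (KD / τ) * (u r - u (r - 1)) :=
  stmt15_general KP KI KD τ u xhat hx0 hx yhat hy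
end
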